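/- Let q be a prime number and l ≥ 2 an integer. A rational number α belongs to ℚ-KS(qˡ) if and only if α ≠ 0, α ≠ qˡ, and there exist a positive integer d dividing qˡ − q and a nonzero integer s such that α = q + d/s. -/

import Mathlib

/-! Write `α = a / b` in lowest terms and `t = b q - a`. Since `b qˡ - a = b (qˡ - q) + t` and `t`
is coprime to `b`, the Korselt condition for `qˡ` says exactly `t ∣ qˡ - q`. As `α - q = -t / b`,
a factorisation `qˡ - q = t k` gives `α = q + (qˡ - q) / (-k b)`; conversely `α = q + d / s` gives
`-t s = d b`, so `t ∣ d b ∣ (qˡ - q) b` and hence `t ∣ qˡ - q`. -/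

/-- `α` is an `N`-Korselt base: `α ≠ 0`, `α ≠ N`, and for every prime `p` dividing `N`,
`α.den * p - α.num` divides `α.den * N - α.num`. -/
def QKS (N : ℕ) (α : ℚ) : Prop :=
  α ≠ 0 ∧ α ≠ (N : ℚ) ∧
    ∀ p : ℕ, p.Prime → p ∣ N →
      ((α.den : ℤ) * p - α.num) ∣ ((α.den : ℤ) * N - α.num)

namespace Rat

theorem isCoprime_den_mul_sub_num (α : ℚ) (m : ℤ) :
    IsCoprime ((α.den : ℤ) * m - α.num) α.den := by
  have h : IsCoprime α.num α.den := Int.isCoprime_iff_gcd_eq_one.mpr α.reduced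
  simpa [sub_eq_neg_add, mul_comm] using h.neg_left.add_mul_left_left m

theorem sub_intCast_eq_neg_div_den (α : ℚ) (m : ℤ) :
    α - m = -(((α.den : ℤ) * m - α.num : ℤ) : ℚ) / α.den := by
  have hden : (α.den : ℚ) ≠ 0 := by exact_mod_cast α.den_nz
  field_simp
  push_cast
  linear_combination Rat.mul_den_eq_num α

theorem den_mul_sub_num_dvd_iff_dvd_sub (α : ℚ) (m n : ℤ) :
    (α.den : ℤ) * m - α.num ∣ (α.den : ℤ) * n - α.num ↔ (α.den : ℤ) * m - α.num ∣ n - m := by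
  have h : (α.den : ℤ) * n - α.num = α.den * (n - m) + ((α.den : ℤ) * m - α.num) := by ring
  rw [h, dvd_add_left dvd_rfl]
  exact ⟨(isCoprime_den_mul_sub_num α m).dvd_of_dvd_mul_left, (·.mul_left _)⟩

theorem den_mul_sub_num_dvd_iff_exists_eq_add_div (α : ℚ) (m : ℤ) {M : ℤ} (hM : M ≠ 0) :
    (α.den : ℤ) * m - α.num ∣ M ↔ ∃ s : ℤ, s ≠ 0 ∧ α = m + (M : ℚ) / s := by
  have hden : (α.den : ℚ) ≠ 0 := by exact_mod_cast α.den_nz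
  have hα := sub_intCast_eq_neg_div_den α m
  constructor
  · rintro ⟨k, rfl⟩
    have hk : k ≠ 0 := right_ne_zero_of_mul hM
    refine ⟨-(k * α.den), by simp [hk], ?_⟩
    rw [← sub_eq_iff_eq_add', hα]
    push_cast
    field_simp
  · rintro ⟨s, hs, hαs⟩
    have hs' : (s : ℚ) ≠ 0 := by exact_mod_cast hs
    have h : (M : ℚ) / s = -(((α.den : ℤ) * m - α.num : ℤ) : ℚ) / α.den := by
      rw [← hα, hαs, add_sub_cancel_left]
    rw [div_eq_div_iff hs' hden] at h
    have key : (α.den : ℤ) * m - α.num ∣ M * α.den := ⟨-s, by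
      rw [mul_neg, ← neg_mul]; exact_mod_cast h⟩
    exact (isCoprime_den_mul_sub_num α m).dvd_of_dvd_mul_right key

theorem den_mul_sub_num_dvd_iff_exists_pos_dvd (α : ℚ) (m : ℤ) {M : ℤ} (hM : 0 < M) :
    (α.den : ℤ) * m - α.num ∣ M ↔
      ∃ d : ℤ, 0 < d ∧ d ∣ M ∧ ∃ s : ℤ, s ≠ 0 ∧ α = m + (d : ℚ) / s := by
  constructor
  · intro h
    exact ⟨M, hM, dvd_rfl, (den_mul_sub_num_dvd_iff_exists_eq_add_div α m hM.ne').mp h⟩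
  · rintro ⟨d, hd, hdM, hα⟩
    exact ((den_mul_sub_num_dvd_iff_exists_eq_add_div α m hd.ne').mpr hα).trans hdM

end Rat

theorem qks_prime_pow_iff {q : ℕ} (hq : q.Prime) {l : ℕ} (hl : l ≠ 0) (α : ℚ) :
    QKS (q ^ l) α ↔ α ≠ 0 ∧ α ≠ (q : ℚ) ^ l ∧
      (α.den : ℤ) * q - α.num ∣ (α.den : ℤ) * (q : ℤ) ^ l - α.num := by
  have hp : ∀ p : ℕ, p.Prime → p ∣ q ^ l → p = q := fun p hp h =>
    (Nat.prime_dvd_prime_iff_eq hp hq).mp (hp.dvd_of_dvd_pow h)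
  unfold QKS
  push_cast
  refine and_congr_right' (and_congr_right' ⟨fun h => h q hq (dvd_pow_self q hl), ?_⟩)
  rintro h p hp' hpq
  rwa [hp p hp' hpq]

theorem stmt_7 (q : ℕ) (hq : q.Prime) (l : ℕ) (hl : 2 ≤ l) (α : ℚ) :
    QKS (q ^ l) α ↔
      α ≠ 0 ∧ α ≠ (q : ℚ) ^ l ∧
        ∃ d : ℤ, 0 < d ∧ d ∣ ((q : ℤ) ^ l - q) ∧
          ∃ s : ℤ, s ≠ 0 ∧ α = (q : ℚ) + (d : ℚ) / (s : ℚ) := by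
  have hM : 0 < (q : ℤ) ^ l - q := by
    have : (q : ℤ) ^ 1 < (q : ℤ) ^ l := pow_lt_pow_right₀ (by exact_mod_cast hq.one_lt) hl
    linarith [pow_one (q : ℤ)]
  rw [qks_prime_pow_iff hq (by omega), Rat.den_mul_sub_num_dvd_iff_dvd_sub,
    Rat.den_mul_sub_num_dvd_iff_exists_pos_dvd α q hM, Int.cast_natCast]
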